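/- arXiv:1805.11297 — 3 statements merged into one kernel-verified Lean document; each statement's English description precedes it below -/
import Mathlib

section
/- The marginal energy cost satisfies OPT_π(p̂) − OPT_π(p̂_{−i}) < (p̂_i/(α−1))·Σ_{k=1}^i ℓ_k + ℓ_i s_i^α. -/
/-!
With `S_k = ∑_{j ≥ k} p̂_j` and `β = 1 - 1/α`, job `k` contributes `ℓ_k s_k^α = w_k (S_k/(α-1))^β`
to the optimal energy. Removing job `i` leaves the jobs after `i` untouched and lowers `S_k` by `p̂_i`
for the jobs before it. Since `β ≤ 1`, `x^β - y^β ≤ (x - y) x^(β-1)` for `0 < y ≤ x`, and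
`w_k (S_k/(α-1))^(β-1) = ℓ_k`, so each of those jobs saves at most `p̂_i/(α-1) · ℓ_k`. The term
`k = i` of the bound makes the inequality strict.
-/

open Real Finset

lemma rpow_sub_rpow_le_sub_mul_rpow_sub_one {β x y : ℝ} (hβ : β ≤ 1) (hy : 0 < y)
    (hyx : y ≤ x) : x ^ β - y ^ β ≤ (x - y) * x ^ (β - 1) := by
  have hx : 0 < x := hy.trans_le hyx
  have hmono : x ^ (β - 1) ≤ y ^ (β - 1) := rpow_le_rpow_of_nonpos hy hyx (by linarith)
  calc x ^ β - y ^ β = x * x ^ (β - 1) - y * y ^ (β - 1) := by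
        rw [rpow_sub_one hx.ne', rpow_sub_one hy.ne', mul_div_cancel₀ _ hx.ne',
          mul_div_cancel₀ _ hy.ne']
    _ ≤ x * x ^ (β - 1) - y * x ^ (β - 1) := by gcongr
    _ = (x - y) * x ^ (β - 1) := by ring

lemma mul_rpow_inv_mul_div_rpow_eq {α r : ℝ} (hα : α ≠ 0) (hr : 0 < r) (w : ℝ) :
    w * r ^ (1 / α) * (w / (w * r ^ (1 / α))) ^ α = w * r ^ (1 / α - 1) := by
  rcases eq_or_ne w 0 with rfl | hw
  · simp
  have hroot : 0 < r ^ (1 / α) := rpow_pos_of_pos hr _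
  rw [div_mul_cancel_left₀ hw, inv_rpow hroot.le, ← rpow_mul hr.le, one_div_mul_cancel hα,
    rpow_one, rpow_sub_one hr.ne']
  ring

lemma div_rpow_inv_sub_one_eq {c T α : ℝ} (hc : 0 < c) (hT : 0 < T) :
    (c / T) ^ (1 / α - 1) = (T / c) ^ (1 - 1 / α) := by
  rw [← inv_div, inv_rpow (by positivity), ← rpow_neg (by positivity), neg_sub]

lemma mul_div_rpow_sub_le {c α w T q : ℝ} (hc : 0 < c) (hα : 0 < α) (hw : 0 ≤ w) (hT : 0 < T)
    (hq : 0 ≤ q) :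
    w * (c / (T + q)) ^ (1 / α - 1) - w * (c / T) ^ (1 / α - 1)
      ≤ q / c * (w * (c / (T + q)) ^ (1 / α)) := by
  have hTq : 0 < T + q := by linarith
  have key := rpow_sub_rpow_le_sub_mul_rpow_sub_one (β := 1 - 1 / α)
    (sub_le_self _ (by positivity)) (div_pos hT hc)
    (div_le_div_of_nonneg_right (by linarith : T ≤ T + q) hc.le)
  rw [div_rpow_inv_sub_one_eq hc hTq, div_rpow_inv_sub_one_eq hc hT]
  rw [show 1 - 1 / α - 1 = -(1 / α) by ring, rpow_neg (by positivity), ← inv_rpow (by positivity),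
    inv_div, ← sub_div, add_sub_cancel_left] at key
  calc _ = w * (((T + q) / c) ^ (1 - 1 / α) - (T / c) ^ (1 - 1 / α)) := by ring
    _ ≤ w * (q / c * (c / (T + q)) ^ (1 / α)) := by gcongr
    _ = _ := by ring

lemma sum_sub_sum_erase_eq_add_sum_Iio {ι M : Type*} [Fintype ι] [LinearOrder ι]
    [LocallyFiniteOrderBot ι] [AddCommGroup M] {f g : ι → M} (i : ι)
    (hfg : ∀ k, i < k → g k = f k) :
    ∑ k, f k - ∑ k ∈ univ.erase i, g k = f i + ∑ k ∈ Iio i, (f k - g k) := by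
  have hrestrict : ∑ k ∈ univ.erase i, (f k - g k) = ∑ k ∈ Iio i, (f k - g k) := by
    refine (sum_subset (fun k hk => mem_erase.2 ⟨(mem_Iio.1 hk).ne, mem_univ k⟩)
      fun k hk hk' => ?_).symm
    rw [hfg k (lt_of_le_of_ne (not_lt.1 (mt mem_Iio.2 hk')) (ne_of_mem_erase hk).symm), sub_self]
  rw [← add_sum_erase _ _ (mem_univ i), ← hrestrict, sum_sub_distrib, add_sub_assoc]

/-- The marginal energy cost of player `i` is bounded:
`OPT_π(p̂) − OPT_π(p̂_{−i}) < (p̂_i/(α−1))·∑_{k≤i} ℓ_k + ℓ_i s_i^α`. -/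
theorem stmt10 (n : ℕ) (α : ℝ) (hα : 1 < α) (w p : Fin n → ℝ)
    (hw : ∀ j, 0 < w j) (hp : ∀ j, 0 < p j)
    (ℓ : Fin n → ℝ)
    (hℓ : ∀ k, ℓ k = w k * ((α - 1) / ∑ j ∈ Finset.Ici k, p j) ^ (1/α))
    (s : Fin n → ℝ) (hs : ∀ k, s k = w k / ℓ k)
    (OPT : ℝ) (hOPT : OPT = ∑ k, ℓ k * (s k) ^ α)
    (i : Fin n)
    (ℓ' : Fin n → ℝ)
    (hℓ' : ∀ k, ℓ' k = w k * ((α - 1) / ∑ j ∈ (Finset.Ici k).erase i, p j) ^ (1/α))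
    (OPT' : ℝ) (hOPT' : OPT' = ∑ k ∈ Finset.univ.erase i, ℓ' k * (w k / ℓ' k) ^ α) :
    OPT - OPT' < p i / (α - 1) * (∑ k ∈ Finset.Iic i, ℓ k) + ℓ i * (s i) ^ α := by
  have hc : 0 < α - 1 := by linarith
  have hS : ∀ k, 0 < ∑ j ∈ Ici k, p j := fun k =>
    sum_pos (fun j _ => hp j) ⟨k, mem_Ici.2 le_rfl⟩
  have hS' : ∀ k ≠ i, 0 < ∑ j ∈ (Ici k).erase i, p j := fun k hk =>
    sum_pos (fun j _ => hp j) ⟨k, mem_erase.2 ⟨hk, mem_Ici.2 le_rfl⟩⟩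
  set E : Fin n → ℝ := fun k => w k * ((α - 1) / ∑ j ∈ Ici k, p j) ^ (1 / α - 1)
  set E' : Fin n → ℝ := fun k => w k * ((α - 1) / ∑ j ∈ (Ici k).erase i, p j) ^ (1 / α - 1)
  have hterm : ∀ k, ℓ k * s k ^ α = E k := fun k => by
    rw [hs, hℓ]
    exact mul_rpow_inv_mul_div_rpow_eq (by positivity) (div_pos hc (hS k)) _
  have hterm' : ∀ k ∈ univ.erase i, ℓ' k * (w k / ℓ' k) ^ α = E' k := fun k hk => by
    rw [hℓ']
    exact mul_rpow_inv_mul_div_rpow_eq (by positivity) (div_pos hc (hS' k (ne_of_mem_erase hk))) _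
  have hE'_of_lt : ∀ k, i < k → E' k = E k := fun k hik => by
    simp only [E, E', erase_eq_of_notMem (fun h => (mem_Ici.1 h).not_gt hik)]
  have hE_sub_le : ∀ k < i, E k - E' k ≤ p i / (α - 1) * ℓ k := fun k hki => by
    simpa only [E, E', hℓ k, sum_erase_add _ _ (mem_Ici.2 hki.le)] using
      mul_div_rpow_sub_le hc (by linarith : (0 : ℝ) < α) (hw k).le (hS' k hki.ne) (hp i).le
  have hℓi : 0 < ℓ i := hℓ i ▸ mul_pos (hw i) (rpow_pos_of_pos (div_pos hc (hS i)) _)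
  calc OPT - OPT' = ℓ i * s i ^ α + ∑ k ∈ Iio i, (E k - E' k) := by
        rw [hOPT, hOPT', sum_congr rfl fun k _ => hterm k, sum_congr rfl hterm', hterm i]
        exact sum_sub_sum_erase_eq_add_sum_Iio i hE'_of_lt
    _ ≤ ℓ i * s i ^ α + ∑ k ∈ Iio i, p i / (α - 1) * ℓ k := by
      gcongr with k hk
      exact hE_sub_le k (mem_Iio.1 hk)
    _ < p i / (α - 1) * (∑ k ∈ Iic i, ℓ k) + ℓ i * s i ^ α := by
      rw [mul_sum, ← Iio_insert, sum_insert notMem_Iio_self]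
      have : 0 < p i / (α - 1) * ℓ i := mul_pos (div_pos (hp i) hc) hℓi
      linarith
end

section
/- The total cost shares are bounded: OPT_π(p̂) ≤ Σ_{i=1}^n b_i ≤ (α+1)·OPT_π(p̂), i.e., the mechanism is (α+1)-budget-balanced. -/
/-!
Write `P k = ∑_{j ≥ k} p j` and `E_k(x) = w_k (x / (α - 1))^((α - 1) / α)`. Then `ℓ_k s_k^α = E_k(P k)`
and `ℓ_k P k = (α - 1) E_k(P k)`, so exchanging the order of summation turns the penalty part of
`∑ b_i` into `(α - 1) OPT`, and `∑ b_i = α ∑_i (OPT - OPT_{-i}) - (α - 1) OPT`.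
Removing player `i` deletes `E_i(P i)` and lowers `P k` by `p i` for `k < i`, so
`∑_i (OPT - OPT_{-i}) = OPT + ∑_k ∑_{i > k} (E_k(P k) - E_k(P k - p i))`.
Each `E_k` is increasing and concave with `E_k(0) = 0`; along the telescoping chain
`P k ≥ P k - p i₁ ≥ P k - p i₁ - p i₂ ≥ ⋯` the decrements of a concave function only grow, so the
inner sum lies between `0` and `E_k(P k)`. Hence `OPT ≤ ∑_i (OPT - OPT_{-i}) ≤ 2 OPT`.
-/

open Real Finset

section Concave

variable {f : ℝ → ℝ}

lemma ConcaveOn.add_sub_le_add_sub {s : Set ℝ} (hf : ConcaveOn ℝ s f) {a b t : ℝ}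
    (ha : a ∈ s) (hbt : b + t ∈ s) (hab : a ≤ b) (ht : 0 ≤ t) :
    f (b + t) - f b ≤ f (a + t) - f a := by
  rcases (add_nonneg (sub_nonneg.2 hab) ht).eq_or_lt with hd | hd
  · obtain ⟨rfl, rfl⟩ : b = a ∧ t = 0 := by constructor <;> linarith
    simp
  -- `b` and `a + t` are the convex combinations of `a` and `b + t` with swapped weights
  set d := b - a + t with hd_def
  have hwa : 0 ≤ t / d := div_nonneg ht hd.le
  have hwb : 0 ≤ (b - a) / d := div_nonneg (sub_nonneg.2 hab) hd.le
  have hsum : t / d + (b - a) / d = 1 := by rw [← add_div, div_eq_one_iff_eq hd.ne']; ring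
  have eb : t / d * a + (b - a) / d * (b + t) = b := by
    rw [div_mul_eq_mul_div, div_mul_eq_mul_div, ← add_div, div_eq_iff hd.ne', hd_def]; ring
  have eat : (b - a) / d * a + t / d * (b + t) = a + t := by
    rw [div_mul_eq_mul_div, div_mul_eq_mul_div, ← add_div, div_eq_iff hd.ne', hd_def]; ring
  have hb := hf.2 ha hbt hwa hwb hsum
  have hat := hf.2 ha hbt hwb hwa (by linarith)
  simp only [smul_eq_mul, eb, eat] at hb hat
  linear_combination hb + hat - (f a + f (b + t)) * hsum

lemma ConcaveOn.sum_sub_le {ι : Type*} [DecidableEq ι] (hf : ConcaveOn ℝ (Set.Ici 0) f)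
    {p : ι → ℝ} {S : Finset ι} (hp : ∀ i ∈ S, 0 ≤ p i) {P : ℝ} (hP : ∑ i ∈ S, p i ≤ P) :
    ∑ i ∈ S, (f P - f (P - p i)) ≤ f P - f (P - ∑ i ∈ S, p i) := by
  induction S using Finset.induction_on with
  | empty => simp
  | @insert a S ha ih =>
    rw [sum_insert ha] at hP ⊢
    rw [sum_insert ha]
    have hpa := hp a (mem_insert_self a S)
    have hpS : ∀ i ∈ S, 0 ≤ p i := fun i hi => hp i (mem_insert_of_mem hi)
    have hS := sum_nonneg hpS
    have hinc := hf.add_sub_le_add_sub (a := P - ∑ i ∈ S, p i - p a) (b := P - p a)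
      (t := p a) (by simp only [Set.mem_Ici]; linarith) (by simp only [Set.mem_Ici]; linarith)
      (by linarith) hpa
    simp only [sub_add_cancel] at hinc
    have := ih hpS (by linarith)
    rw [show P - (p a + ∑ i ∈ S, p i) = P - ∑ i ∈ S, p i - p a by ring]
    linarith

lemma ConcaveOn.sum_sub_mem_Icc {ι : Type*} [DecidableEq ι] (hf : ConcaveOn ℝ (Set.Ici 0) f)
    (hmono : MonotoneOn f (Set.Ici 0)) (hf0 : 0 ≤ f 0) {p : ι → ℝ} {S : Finset ι}
    (hp : ∀ i ∈ S, 0 ≤ p i) {P : ℝ} (hP : ∑ i ∈ S, p i ≤ P) :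
    ∑ i ∈ S, (f P - f (P - p i)) ∈ Set.Icc 0 (f P) := by
  have hS := sum_nonneg hp
  constructor
  · refine sum_nonneg fun i hi => sub_nonneg.2 (hmono ?_ ?_ (by linarith [hp i hi]))
    · have := single_le_sum hp hi
      simp only [Set.mem_Ici]; linarith
    · simp only [Set.mem_Ici]; linarith
  · have hrest : f 0 ≤ f (P - ∑ i ∈ S, p i) :=
      hmono Set.self_mem_Ici (by simp only [Set.mem_Ici]; linarith) (by linarith)
    linarith [hf.sum_sub_le hp hP]

end Concave

section Schedule

variable {ι : Type*} [Fintype ι] [LinearOrder ι] [LocallyFiniteOrderTop ι]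
  [LocallyFiniteOrderBot ι]

lemma sum_mul_sum_Iic_eq_sum_mul_sum_Ici (p ℓ : ι → ℝ) :
    ∑ i, p i * ∑ k ∈ Iic i, ℓ k = ∑ k, ℓ k * ∑ i ∈ Ici k, p i := by
  simp_rw [mul_sum]
  rw [sum_comm' (t' := univ) (s' := fun k => Ici k) (by simp)]
  exact sum_congr rfl fun k _ => sum_congr rfl fun i _ => mul_comm _ _

lemma sum_sub_sum_erase_Ici (E : ι → ℝ → ℝ) (p : ι → ℝ) (i : ι) :
    ∑ k, E k (∑ j ∈ Ici k, p j) - ∑ k ∈ univ.erase i, E k (∑ j ∈ (Ici k).erase i, p j)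
      = E i (∑ j ∈ Ici i, p j) +
        ∑ k ∈ Iio i, (E k (∑ j ∈ Ici k, p j) - E k (∑ j ∈ Ici k, p j - p i)) := by
  rw [← add_sum_erase _ _ (mem_univ i), add_sub_assoc, ← sum_sub_distrib]
  congr 1
  rw [← sum_filter_add_sum_filter_not _ (· < i)]
  have hlt : (univ.erase i).filter (· < i) = Iio i := by
    ext k; simpa using ne_of_lt
  rw [hlt, sum_eq_zero (s := (univ.erase i).filter (¬ · < i)), add_zero]
  · exact sum_congr rfl fun k hk => by
      rw [sum_erase_eq_sub (mem_Ici.2 (mem_Iio.1 hk).le)]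
  · intro k hk
    simp only [mem_filter, mem_erase, mem_univ, and_true, not_lt] at hk
    rw [erase_eq_of_notMem (by simpa using hk.2.lt_of_ne' hk.1), sub_self]

lemma sum_sum_sub_sum_erase_Ici (E : ι → ℝ → ℝ) (p : ι → ℝ) :
    ∑ i, (∑ k, E k (∑ j ∈ Ici k, p j) - ∑ k ∈ univ.erase i, E k (∑ j ∈ (Ici k).erase i, p j))
      = ∑ k, E k (∑ j ∈ Ici k, p j) +
        ∑ k, ∑ i ∈ Ioi k, (E k (∑ j ∈ Ici k, p j) - E k (∑ j ∈ Ici k, p j - p i)) := by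
  simp_rw [sum_sub_sum_erase_Ici]
  rw [sum_add_distrib]
  congr 1
  exact sum_comm' (by simp)

lemma sum_sum_sub_sum_erase_Ici_mem_Icc (E : ι → ℝ → ℝ) (p : ι → ℝ)
    (hE : ∀ k, ConcaveOn ℝ (Set.Ici 0) (E k)) (hEm : ∀ k, MonotoneOn (E k) (Set.Ici 0))
    (hE0 : ∀ k, 0 ≤ E k 0) (hp : ∀ j, 0 ≤ p j) :
    ∑ i, (∑ k, E k (∑ j ∈ Ici k, p j) - ∑ k ∈ univ.erase i, E k (∑ j ∈ (Ici k).erase i, p j))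
      ∈ Set.Icc (∑ k, E k (∑ j ∈ Ici k, p j)) (2 * ∑ k, E k (∑ j ∈ Ici k, p j)) := by
  have hk (k : ι) := (hE k).sum_sub_mem_Icc (hEm k) (hE0 k) (S := Ioi k) (fun i _ => hp i)
    (sum_le_sum_of_subset_of_nonneg (Ioi_subset_Ici_self (a := k)) fun j _ _ => hp j)
  rw [sum_sum_sub_sum_erase_Ici]
  constructor
  · linarith [sum_nonneg fun k (_ : k ∈ univ) => (hk k).1]
  · linarith [sum_le_sum fun k (_ : k ∈ univ) => (hk k).2]

end Schedule

noncomputable section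

/-- For a job of workload `w` whose own and later penalties sum to `x`, `optLength α w x` is the
optimal length `ℓ` and `optEnergy α w x` the resulting energy `ℓ (w / ℓ)^α`. -/
def optLength (α w x : ℝ) : ℝ := w * ((α - 1) / x) ^ (1 / α)

def optEnergy (α w x : ℝ) : ℝ := w * (x / (α - 1)) ^ ((α - 1) / α)

end

section Energy

variable {α w x : ℝ}

lemma optLength_mul_rpow (hα : 1 < α) (hw : 0 < w) (hx : 0 < x) :
    optLength α w x * (w / optLength α w x) ^ α = optEnergy α w x := by
  have hq : 0 < (α - 1) / x := div_pos (by linarith) hx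
  have hspeed : w / optLength α w x = (((α - 1) / x) ^ (1 / α))⁻¹ := by
    rw [optLength]; field_simp
  rw [hspeed, inv_rpow (rpow_nonneg hq.le _), ← rpow_mul hq.le, one_div_mul_cancel (by linarith),
    rpow_one, optLength, optEnergy, ← inv_div (α - 1), inv_rpow hq.le, ← rpow_neg hq.le, mul_assoc,
    ← rpow_neg_one, ← rpow_add hq]
  congr 2
  field_simp
  ring

lemma optLength_mul (hα : 1 < α) (hx : 0 < x) :
    optLength α w x * x = (α - 1) * optEnergy α w x := by
  have hq : 0 < (α - 1) / x := div_pos (by linarith) hx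
  have hexp : -((α - 1) / α) = 1 / α + -1 := by field_simp; ring
  rw [optLength, optEnergy, ← inv_div (α - 1), inv_rpow hq.le, ← rpow_neg hq.le, hexp, rpow_add hq,
    rpow_neg_one, inv_div]
  field_simp [(by linarith : α - 1 ≠ 0)]

lemma optEnergy_concaveOn (hα : 1 < α) (hw : 0 ≤ w) :
    ConcaveOn ℝ (Set.Ici 0) (optEnergy α w) := by
  have hβ0 : 0 ≤ (α - 1) / α := div_nonneg (by linarith) (by linarith)
  have hβ1 : (α - 1) / α ≤ 1 := (div_le_one (by linarith)).2 (by linarith)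
  refine ((concaveOn_rpow hβ0 hβ1).smul
    (div_nonneg hw (rpow_nonneg (by linarith : (0 : ℝ) ≤ α - 1) ((α - 1) / α)))).congr fun y hy => ?_
  simp only [optEnergy, smul_eq_mul, div_rpow (Set.mem_Ici.1 hy) (by linarith : (0 : ℝ) ≤ α - 1)]
  ring

lemma optEnergy_monotoneOn (hα : 1 < α) (hw : 0 ≤ w) :
    MonotoneOn (optEnergy α w) (Set.Ici 0) := fun y hy z _ hyz =>
  mul_le_mul_of_nonneg_left (rpow_le_rpow (div_nonneg hy (by linarith))
    (div_le_div_of_nonneg_right hyz (by linarith)) (div_nonneg (by linarith) (by linarith))) hw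

lemma optEnergy_zero (hα : 1 < α) : optEnergy α w 0 = 0 := by
  rw [optEnergy, zero_div, zero_rpow (div_pos (by linarith) (by linarith)).ne', mul_zero]

end Energy

/-- The mechanism is `(α+1)`-budget-balanced:
`OPT_π(p̂) ≤ ∑ b_i ≤ (α+1)·OPT_π(p̂)`. -/
theorem stmt11 (n : ℕ) (α : ℝ) (hα : 1 < α) (w p : Fin n → ℝ)
    (hw : ∀ j, 0 < w j) (hp : ∀ j, 0 < p j)
    (ℓ : Fin n → ℝ)
    (hℓ : ∀ k, ℓ k = w k * ((α - 1) / ∑ j ∈ Finset.Ici k, p j) ^ (1/α))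
    (s : Fin n → ℝ) (hs : ∀ k, s k = w k / ℓ k)
    (OPT : ℝ) (hOPT : OPT = ∑ k, ℓ k * (s k) ^ α)
    (ℓ' : Fin n → Fin n → ℝ)
    (hℓ' : ∀ i k, ℓ' i k = w k * ((α - 1) / ∑ j ∈ (Finset.Ici k).erase i, p j) ^ (1/α))
    (OPT' : Fin n → ℝ)
    (hOPT' : ∀ i, OPT' i = ∑ k ∈ Finset.univ.erase i, ℓ' i k * (w k / ℓ' i k) ^ α)
    (b : Fin n → ℝ)
    (hb : ∀ i, b i = α * (OPT - OPT' i) - p i * ∑ k ∈ Finset.Iic i, ℓ k) :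
    OPT ≤ ∑ i, b i ∧ ∑ i, b i ≤ (α + 1) * OPT := by
  have hP (k : Fin n) : 0 < ∑ j ∈ Ici k, p j := sum_pos (fun j _ => hp j) ⟨k, mem_Ici.2 le_rfl⟩
  have hOPT_eq : OPT = ∑ k, optEnergy α (w k) (∑ j ∈ Ici k, p j) := by
    rw [hOPT]
    refine sum_congr rfl fun k _ => ?_
    rw [hs, hℓ]
    exact optLength_mul_rpow hα (hw k) (hP k)
  have hOPT'_eq (i : Fin n) :
      OPT' i = ∑ k ∈ univ.erase i, optEnergy α (w k) (∑ j ∈ (Ici k).erase i, p j) := by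
    rw [hOPT']
    refine sum_congr rfl fun k hk => ?_
    rw [hℓ']
    exact optLength_mul_rpow hα (hw k) (sum_pos (fun j _ => hp j)
      ⟨k, mem_erase.2 ⟨ne_of_mem_erase hk, mem_Ici.2 le_rfl⟩⟩)
  have hpenalty : ∑ i, p i * ∑ k ∈ Iic i, ℓ k = (α - 1) * OPT := by
    rw [sum_mul_sum_Iic_eq_sum_mul_sum_Ici, hOPT_eq, mul_sum]
    refine sum_congr rfl fun k _ => ?_
    rw [hℓ]
    exact optLength_mul hα (hP k)
  have hbudget : ∑ i, b i = α * ∑ i, (OPT - OPT' i) - (α - 1) * OPT := by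
    rw [← hpenalty, mul_sum, ← sum_sub_distrib]
    exact sum_congr rfl fun i _ => hb i
  obtain ⟨hlow, hhigh⟩ := sum_sum_sub_sum_erase_Ici_mem_Icc (fun k => optEnergy α (w k)) p
    (fun k => optEnergy_concaveOn hα (hw k).le) (fun k => optEnergy_monotoneOn hα (hw k).le)
    (fun k => (optEnergy_zero hα).ge) (fun j => (hp j).le)
  simp only [← hOPT_eq, ← hOPT'_eq] at hlow hhigh
  rw [hbudget]
  constructor <;> nlinarith
end

section
/- The social cost at the truthful Nash equilibrium of the mechanism (for a fixed order π) is at most (α+1) times the optimal social cost for that order; in particular since the equilibrium lengths are the minimizers of A_{w,p}(π,·), the equilibrium social cost plus overcharge α·OPT_π(p) is at most (α+1) times min_ℓ A_{w,p}(π,ℓ) = α·OPT_π(p). -/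
open Real Finset

/-!
After exchanging the order of summation, `A ℓ = ∑ j, (w j ^ α * ℓ j ^ (1 - α) + S j * ℓ j)` with
`S j = ∑_{k : ord j ≤ ord k} p k`, so `A` separates into one-variable problems. The prescribed
`ℓopt j` satisfies the first-order condition `S j * ℓopt j = (α - 1) * w j ^ α * ℓopt j ^ (1 - α)`,
so each summand equals `α` times its energy part, giving `A ℓopt = α * OPT`; minimality of each
summand is the weighted AM-GM inequality `α ≤ t ^ (1 - α) + (α - 1) * t` at `t = ℓ j / ℓopt j`.
-/

theorem Real.le_rpow_one_sub_add_sub_one_mul {α t : ℝ} (hα : 1 < α) (ht : 0 < t) :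
    α ≤ t ^ (1 - α) + (α - 1) * t := by
  have hα0 : 0 < α := by linarith
  have amgm := Real.geom_mean_le_arith_mean2_weighted (w₁ := 1 / α) (w₂ := (α - 1) / α)
    (p₁ := t ^ (1 - α)) (p₂ := t)
    (one_div_nonneg.2 hα0.le) (div_nonneg (by linarith) hα0.le) (rpow_nonneg ht.le _) ht.le
    (by field_simp; ring)
  have geom_eq_one : (t ^ (1 - α)) ^ (1 / α) * t ^ ((α - 1) / α) = 1 := by
    rw [← rpow_mul ht.le, ← rpow_add ht, show (1 - α) * (1 / α) + (α - 1) / α = 0 by ring,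
      rpow_zero]
  rw [geom_eq_one] at amgm
  calc α = α * 1 := (mul_one α).symm
    _ ≤ α * (1 / α * t ^ (1 - α) + (α - 1) / α * t) := mul_le_mul_of_nonneg_left amgm hα0.le
    _ = t ^ (1 - α) + (α - 1) * t := by field_simp

theorem Real.mul_rpow_one_sub_add_mul_le_of_eq {α c s x₀ x : ℝ} (hα : 1 < α) (hc : 0 ≤ c)
    (hx₀ : 0 < x₀) (hx : 0 < x) (hfoc : s * x₀ = (α - 1) * (c * x₀ ^ (1 - α))) :
    c * x₀ ^ (1 - α) + s * x₀ ≤ c * x ^ (1 - α) + s * x := by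
  set t := x / x₀
  have hxt : x = t * x₀ := (div_mul_cancel₀ x hx₀.ne').symm
  have hE : 0 ≤ c * x₀ ^ (1 - α) := mul_nonneg hc (rpow_nonneg hx₀.le _)
  calc c * x₀ ^ (1 - α) + s * x₀ = c * x₀ ^ (1 - α) * α := by rw [hfoc]; ring
    _ ≤ c * x₀ ^ (1 - α) * (t ^ (1 - α) + (α - 1) * t) :=
        mul_le_mul_of_nonneg_left (le_rpow_one_sub_add_sub_one_mul hα (by positivity)) hE
    _ = c * x ^ (1 - α) + s * x := by
        rw [hxt, mul_rpow (by positivity) hx₀.le, show s * (t * x₀) = t * (s * x₀) by ring, hfoc]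
        ring

theorem Real.mul_eq_sub_one_mul_rpow_one_sub_of_eq_mul_rpow {α w s x : ℝ} (hα : 1 < α)
    (hw : 0 < w) (hs : 0 < s) (hx_def : x = w * ((α - 1) / s) ^ (1 / α)) :
    s * x = (α - 1) * (w ^ α * x ^ (1 - α)) := by
  have hq : 0 < (α - 1) / s := div_pos (by linarith) hs
  have hx : 0 < x := by rw [hx_def]; positivity
  have hxα : x ^ α = w ^ α * ((α - 1) / s) := by
    rw [hx_def, mul_rpow hw.le (by positivity), ← rpow_mul hq.le, one_div_mul_cancel (by linarith),
      rpow_one]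
  have hsplit : x = x ^ α * x ^ (1 - α) := by
    rw [← rpow_add hx, add_sub_cancel, rpow_one]
  calc s * x = s * (x ^ α * x ^ (1 - α)) := by rw [← hsplit]
    _ = (α - 1) * (w ^ α * x ^ (1 - α)) := by rw [hxα]; field_simp

theorem Finset.sum_mul_sum_filter_comm {ι R : Type*} [Fintype ι] [CommSemiring R]
    (r : ι → ι → Prop) [DecidableRel r] (p ℓ : ι → R) :
    ∑ j, p j * ∑ i ∈ univ.filter (fun i => r i j), ℓ i
      = ∑ i, (∑ j ∈ univ.filter (fun j => r i j), p j) * ℓ i := by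
  simp only [sum_filter, mul_sum, sum_mul, mul_ite, ite_mul, mul_zero, zero_mul]
  rw [sum_comm]

/-- Efficiency: for a fixed order, the equilibrium lengths minimize the social
cost `A`, the minimal social cost equals `α·OPT_π(p)`, and the equilibrium
social cost plus the overcharge `α·OPT_π(p)` is at most `(α+1)` times the
minimal social cost `α·OPT_π(p)`. -/
theorem stmt18 (n : ℕ) (α : ℝ) (hα : 1 < α) (w p : Fin n → ℝ)
    (hw : ∀ j, 0 < w j) (hp : ∀ j, 0 < p j)
    (ord : Equiv.Perm (Fin n))
    (A : (Fin n → ℝ) → ℝ)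
    (hA : A = fun ℓ => ∑ j, (w j) ^ α * (ℓ j) ^ (1 - α)
        + ∑ j, p j * ∑ i ∈ Finset.univ.filter (fun i => ord i ≤ ord j), ℓ i)
    (ℓopt : Fin n → ℝ)
    (hℓopt : ∀ j, ℓopt j = w j
        * ((α - 1) / ∑ k ∈ Finset.univ.filter (fun k => ord j ≤ ord k), p k) ^ (1/α))
    (OPT : ℝ) (hOPT : OPT = ∑ j, (w j) ^ α * (ℓopt j) ^ (1 - α)) :
    (∀ ℓ : Fin n → ℝ, (∀ j, 0 < ℓ j) → A ℓopt ≤ A ℓ)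
    ∧ A ℓopt = α * OPT
    ∧ A ℓopt + α * OPT ≤ (α + 1) * (α * OPT) := by
  set S : Fin n → ℝ := fun j => ∑ k ∈ univ.filter (fun k => ord j ≤ ord k), p k
  have hS : ∀ j, 0 < S j := fun j => sum_pos (fun k _ => hp k) ⟨j, by simp⟩
  have hA' : ∀ ℓ, A ℓ = ∑ j, (w j ^ α * ℓ j ^ (1 - α) + S j * ℓ j) := fun ℓ => by
    rw [hA, sum_add_distrib]
    exact congrArg _ (sum_mul_sum_filter_comm _ p ℓ)
  have hℓopt_pos : ∀ j, 0 < ℓopt j := fun j => by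
    rw [hℓopt]; exact mul_pos (hw j) (rpow_pos_of_pos (div_pos (by linarith) (hS j)) _)
  have hfoc : ∀ j, S j * ℓopt j = (α - 1) * (w j ^ α * ℓopt j ^ (1 - α)) := fun j =>
    mul_eq_sub_one_mul_rpow_one_sub_of_eq_mul_rpow hα (hw j) (hS j) (hℓopt j)
  have hval : A ℓopt = α * OPT := by
    rw [hA', hOPT, mul_sum]
    exact sum_congr rfl fun j _ => by rw [hfoc]; ring
  have hOPT_nonneg : 0 ≤ OPT := hOPT ▸ sum_nonneg fun j _ =>
    mul_nonneg (rpow_nonneg (hw j).le _) (rpow_nonneg (hℓopt_pos j).le _)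
  refine ⟨fun ℓ hℓ => ?_, hval, ?_⟩
  · rw [hA', hA']
    exact sum_le_sum fun j _ => mul_rpow_one_sub_add_mul_le_of_eq hα
      (rpow_nonneg (hw j).le _) (hℓopt_pos j) (hℓ j) (hfoc j)
  · rw [hval]
    nlinarith [mul_nonneg (by linarith : (0:ℝ) ≤ α) hOPT_nonneg]
end
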